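/- arXiv:2508.07088 — 5 statements merged into one kernel-verified Lean document; each statement's English description precedes it below -/
import Mathlib

section
/- Let N ≥ 1, let S₁, S₂, S₃ be N×N complex matrices, and define Δ_N(P) = ∑_{α=1}^{3} [S_α, [S_α, P]]. Let ħ ≠ 0 and ν be real numbers. Suppose W, P : ℝ → M_N(ℂ) are differentiable, satisfy Δ_N(P(t)) = −W(t) for all t, and obey the hyperviscous Euler–Zeitlin equation dW/dt = −(1/ħ)[W(t), P(t)] + (ν/ħ²)[P(t), [P(t), W(t)]]. Then the energy t ↦ tr(P(t)·W(t)) is constant in t. -/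
open Matrix

/-- The quantized (Hoppe–Yau) Laplacian built from three fixed matrices `S 0, S 1, S 2`:
`Δ_N P = ∑_{α} [S_α, [S_α, P]]` with `[A, B] = A * B - B * A`. -/
noncomputable def hoppeYauLaplacian {N : ℕ} (S : Fin 3 → Matrix (Fin N) (Fin N) ℂ)
    (P : Matrix (Fin N) (Fin N) ℂ) : Matrix (Fin N) (Fin N) ℂ :=
  ∑ α : Fin 3, (S α * (S α * P - P * S α) - (S α * P - P * S α) * S α)

/-! `Δ = ∑ (ad S_α)²` is symmetric for the trace form `⟨A, B⟩ = tr (A B)`, so `ker Δ` is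
trace-orthogonal to `range Δ`. The stream function `P` is determined by `W` only modulo `ker Δ`
and need not be differentiable; but if `G` is a linear map inverting `Δ` on its range, then
`tr (P W) = -tr (G W · W)`, a quadratic function of `W` alone. Its derivative is
`-2 tr (G W · Ẇ) = 2 tr (P Ẇ)`, because `Ẇ` stays in the closed subspace `range Δ`; and
`tr (P Ẇ) = 0` since `Ẇ` is a combination of commutators `⁅P, X⁆` and `tr (P ⁅P, X⁆) = 0`. -/

open Filter LinearMap

theorem HasDerivAt.mem_of_forall_mem {𝕜 E : Type*} [NontriviallyNormedField 𝕜]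
    [NormedAddCommGroup E] [NormedSpace 𝕜 E] {p : Submodule 𝕜 E} (hp : IsClosed (p : Set E))
    {f : 𝕜 → E} {f' : E} {x : 𝕜} (hf : HasDerivAt f f' x) (hfp : ∀ t, f t ∈ p) : f' ∈ p :=
  hp.mem_of_tendsto (hasDerivAt_iff_tendsto_slope.1 hf) <| Eventually.of_forall fun t =>
    p.smul_mem _ (p.sub_mem (hfp t) (hfp x))

theorem LinearMap.exists_apply_eq_of_mem_range {K V V' : Type*} [DivisionRing K]
    [AddCommGroup V] [Module K V] [AddCommGroup V'] [Module K V'] (f : V →ₗ[K] V') :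
    ∃ g : V' →ₗ[K] V, ∀ y ∈ range f, f (g y) = y := by
  obtain ⟨g, hg⟩ := f.rangeRestrict.exists_rightInverse_of_surjective f.range_rangeRestrict
  obtain ⟨π, hπ⟩ := (range f).subtype.exists_leftInverse_of_injective (Submodule.ker_subtype _)
  refine ⟨g ∘ₗ π, fun y hy => ?_⟩
  have hπy : π y = ⟨y, hy⟩ := LinearMap.congr_fun hπ ⟨y, hy⟩
  simpa [hπy] using congrArg Subtype.val (LinearMap.congr_fun hg ⟨y, hy⟩)

namespace LinearMap.IsSelfAdjoint

variable {𝕜 E F : Type*} [RCLike 𝕜] [NormedAddCommGroup E] [NormedSpace 𝕜 E]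
  [NormedAddCommGroup F] [NormedSpace 𝕜 F] {β : E →ₗ[𝕜] E →ₗ[𝕜] F} {Δ : E →ₗ[𝕜] E}

theorem apply_eq_zero_of_mem_ker_of_mem_range (hΔ : β.IsSelfAdjoint Δ)
    {x y : E} (hx : x ∈ ker Δ) (hy : y ∈ range Δ) : β x y = 0 := by
  obtain ⟨z, rfl⟩ := hy
  rw [← hΔ, mem_ker.1 hx, map_zero, zero_apply]

theorem apply_eq_apply_of_hasDerivAt [FiniteDimensional 𝕜 E] (hβ : ∀ x y, β x y = β y x)
    (hΔ : β.IsSelfAdjoint Δ) {W P D : 𝕜 → E} (hW : ∀ t, HasDerivAt W (D t) t)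
    (hP : ∀ t, Δ (P t) = -W t) (hPD : ∀ t, β (P t) (D t) = 0) (s t : 𝕜) :
    β (P s) (W s) = β (P t) (W t) := by
  obtain ⟨G, hG⟩ := Δ.exists_apply_eq_of_mem_range
  have hWΔ : ∀ t, W t ∈ range Δ := fun t => ⟨-P t, by rw [map_neg, hP, neg_neg]⟩
  have hDΔ : ∀ t, D t ∈ range Δ := fun t =>
    (hW t).mem_of_forall_mem (range Δ).closed_of_finiteDimensional hWΔ
  have hPG : ∀ t, ∀ y ∈ range Δ, β (P t) y = -β (G (W t)) y := fun t y hy => by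
    have hker : P t + G (W t) ∈ ker Δ := by
      rw [mem_ker, map_add, hP, hG _ (hWΔ t), neg_add_cancel]
    rw [eq_neg_iff_add_eq_zero, ← add_apply, ← map_add]
    exact hΔ.apply_eq_zero_of_mem_ker_of_mem_range hker hy
  let γ : E →L[𝕜] E →L[𝕜] F :=
    toContinuousLinearMap (toContinuousLinearMap.toLinearMap ∘ₗ β ∘ₗ G)
  have hγ : ∀ t, HasDerivAt (fun u => γ (W u) (W u)) 0 t := fun t => by
    convert γ.hasDerivAt_of_bilinear (fun _ => hW t) (fun _ => hW t) using 1
    have hGWD : β (G (W t)) (D t) = 0 := by rw [← neg_eq_zero, ← hPG t _ (hDΔ t), hPD]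
    have hGDW : β (G (D t)) (W t) = 0 := by
      rw [← hG _ (hWΔ t), ← hΔ, hG _ (hDΔ t), hβ, hGWD]
    simp [γ, hGWD, hGDW]
  have hγconst : γ (W s) (W s) = γ (W t) (W t) :=
    is_const_of_deriv_eq_zero (fun u => (hγ u).differentiableAt) (fun u => (hγ u).deriv) s t
  rw [hPG s _ (hWΔ s), hPG t _ (hWΔ t)]
  exact congrArg Neg.neg hγconst

end LinearMap.IsSelfAdjoint

namespace Matrix

attribute [local instance] LieRing.ofAssociativeRing

section Trace

variable {n α : Type*} [Fintype n] [CommRing α]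

theorem trace_mul_lie (S A B : Matrix n n α) : trace (A * ⁅S, B⁆) = -trace (⁅S, A⁆ * B) := by
  simp only [Ring.lie_def, mul_sub, sub_mul, trace_sub, ← mul_assoc]
  rw [trace_mul_cycle A B S, trace_mul_comm (A * S) B]
  ring

theorem trace_mul_lie_lie (S A B : Matrix n n α) :
    trace (A * ⁅S, ⁅S, B⁆⁆) = trace (⁅S, ⁅S, A⁆⁆ * B) := by
  rw [trace_mul_lie, trace_mul_lie, neg_neg]

theorem trace_mul_lie_self (A B : Matrix n n α) : trace (A * ⁅A, B⁆) = 0 := by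
  rw [trace_mul_lie, Ring.lie_def, sub_self, zero_mul, trace_zero, neg_zero]

theorem trace_mul_smul_lie_add_smul_lie_lie {R : Type*} [Monoid R] [DistribMulAction R α]
    [SMulCommClass R α α] (a b : R) (W P : Matrix n n α) :
    trace (P * (a • ⁅W, P⁆ + b • ⁅P, ⁅P, W⁆⁆)) = 0 := by
  have hskew : ⁅W, P⁆ = -⁅P, W⁆ := by simp only [Ring.lie_def, neg_sub]
  rw [hskew, mul_add, Matrix.mul_smul, Matrix.mul_smul, mul_neg, trace_add, trace_smul, trace_smul,
    trace_neg, trace_mul_lie_self, trace_mul_lie_self, neg_zero, smul_zero, smul_zero, add_zero]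

end Trace

section SumAdSq

variable (R : Type*) (n α : Type*) [CommRing R] [Fintype n] [CommRing α] [Algebra R α]

noncomputable def traceMulForm : Matrix n n α →ₗ[R] Matrix n n α →ₗ[R] α :=
  (LinearMap.mul R (Matrix n n α)).compr₂ (traceLinearMap n R α)

variable {R n α}

@[simp]
theorem traceMulForm_apply (A B : Matrix n n α) : traceMulForm R n α A B = trace (A * B) := rfl

theorem traceMulForm_comm (A B : Matrix n n α) :
    traceMulForm R n α A B = traceMulForm R n α B A :=
  trace_mul_comm A B

variable {ι : Type*} [Fintype ι] [DecidableEq n]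

variable (R) in
noncomputable def sumAdSq (S : ι → Matrix n n α) : Module.End R (Matrix n n α) :=
  ∑ i, LieAlgebra.ad R (Matrix n n α) (S i) ^ 2

theorem sumAdSq_apply (S : ι → Matrix n n α) (A : Matrix n n α) :
    sumAdSq R S A = ∑ i, ⁅S i, ⁅S i, A⁆⁆ := by
  simp only [sumAdSq, LinearMap.sum_apply, sq, Module.End.mul_apply, LieAlgebra.ad_apply]

theorem isSelfAdjoint_sumAdSq (S : ι → Matrix n n α) :
    (traceMulForm R n α).IsSelfAdjoint (sumAdSq R S) := fun A B => by
  simp only [traceMulForm_apply, sumAdSq_apply, Matrix.sum_mul, Matrix.mul_sum, trace_sum,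
    trace_mul_lie_lie]

end SumAdSq

section Energy

open scoped Matrix.Norms.Elementwise

theorem trace_mul_eq_of_sumAdSq_eq_neg {𝕜 n ι : Type*} [RCLike 𝕜] [Fintype n]
    [DecidableEq n] [Fintype ι] (S : ι → Matrix n n 𝕜) {W P D : ℝ → Matrix n n 𝕜}
    (hW : ∀ t i j, HasDerivAt (fun s => W s i j) (D t i j) t)
    (hP : ∀ t, sumAdSq ℝ S (P t) = -W t) (hPD : ∀ t, trace (P t * D t) = 0) (s t : ℝ) :
    trace (P s * W s) = trace (P t * W t) :=
  (isSelfAdjoint_sumAdSq S).apply_eq_apply_of_hasDerivAt traceMulForm_comm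
    (fun t => hasDerivAt_pi.2 fun i => hasDerivAt_pi.2 (hW t i)) hP hPD s t

end Energy

end Matrix

theorem hoppeYauLaplacian_eq_sumAdSq {N : ℕ} (S : Fin 3 → Matrix (Fin N) (Fin N) ℂ) :
    hoppeYauLaplacian S = Matrix.sumAdSq ℝ S := by
  ext P : 1
  rw [Matrix.sumAdSq_apply]
  rfl

theorem energy_conserved_hyperviscous_euler_zeitlin_general
    {N : ℕ} (S : Fin 3 → Matrix (Fin N) (Fin N) ℂ)
    (hbar ν : ℝ)
    (W P : ℝ → Matrix (Fin N) (Fin N) ℂ)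
    (hPoisson : ∀ t : ℝ, hoppeYauLaplacian S (P t) = -W t)
    (hW : ∀ (t : ℝ) (i j : Fin N),
      HasDerivAt (fun s => W s i j)
        ((-(1 / hbar) • (W t * P t - P t * W t)
          + (ν / hbar ^ 2) • (P t * (P t * W t - W t * P t) - (P t * W t - W t * P t) * P t)) i j) t) :
    ∀ s t : ℝ, Matrix.trace (P s * W s) = Matrix.trace (P t * W t) :=
  Matrix.trace_mul_eq_of_sumAdSq_eq_neg S hW
    (fun t => by rw [← hoppeYauLaplacian_eq_sumAdSq, hPoisson])
    (fun t => trace_mul_smul_lie_add_smul_lie_lie _ _ (W t) (P t))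

/-- along solutions of the hyperviscous Euler–Zeitlin equations
`dW/dt = -(1/hbar)[W, P] + (ν/hbar²)[P, [P, W]]` with `Δ_N P = -W`, the energy
`t ↦ tr(P(t) * W(t))` is constant in `t`.  The time derivative hypothesis is
stated entrywise via `HasDerivAt`. -/
theorem energy_conserved_hyperviscous_euler_zeitlin
    {N : ℕ} (hN : 1 ≤ N) (S : Fin 3 → Matrix (Fin N) (Fin N) ℂ)
    (hbar ν : ℝ) (hbar_ne : hbar ≠ 0)
    (W P : ℝ → Matrix (Fin N) (Fin N) ℂ)
    (hPoisson : ∀ t : ℝ, hoppeYauLaplacian S (P t) = -W t)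
    (hW : ∀ (t : ℝ) (i j : Fin N),
      HasDerivAt (fun s => W s i j)
        ((-(1 / hbar) • (W t * P t - P t * W t)
          + (ν / hbar ^ 2) • (P t * (P t * W t - W t * P t) - (P t * W t - W t * P t) * P t)) i j) t) :
    ∀ s t : ℝ, Matrix.trace (P s * W s) = Matrix.trace (P t * W t) :=
  energy_conserved_hyperviscous_euler_zeitlin_general S hbar ν W P hPoisson hW
end

section
/- Let N ≥ 1, let w, w' ∈ ℝ^N be real vectors, and set D = i·diag(w₁, …, w_N) and D' = i·diag(w'₁, …, w'_N) (diagonal skew-Hermitian matrices). Then for every N×N complex matrix Y, tr([Y, D]† · [Y, D']) = ∑_{i,j=1}^{N} |Y_{ij}|² (w_j − w_i)(w'_j − w'_i). In particular this trace is a real number. -/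
open Matrix

/-!
Commuting with `c • diagonal d` multiplies the entry `Y i j` by `c (d j - d i)`, and
`trace (Aᴴ * B)` is the entrywise pairing `∑ conj (A i j) * B i j`; with `c = I` the two factors of
`I` cancel against each other since `conj I * I = 1`.
-/

theorem Matrix.commutator_smul_diagonal_apply {n R : Type*} [Fintype n] [DecidableEq n]
    [CommRing R] (Y : Matrix n n R) (c : R) (d : n → R) (i j : n) :
    (Y * (c • diagonal d) - (c • diagonal d) * Y) i j = c * Y i j * (d j - d i) := by
  rw [← diagonal_smul, sub_apply, mul_diagonal, diagonal_mul, Pi.smul_apply, smul_eq_mul,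
    Pi.smul_apply, smul_eq_mul]
  ring

theorem Matrix.trace_conjTranspose_mul_eq_sum {m n R : Type*} [Fintype m] [Fintype n]
    [NonUnitalNonAssocSemiring R] [StarRing R] (A B : Matrix m n R) :
    trace (Aᴴ * B) = ∑ i, ∑ j, star (A i j) * B i j := by
  rw [Finset.sum_comm]
  rfl

theorem Complex.star_I_mul_mul_I_mul_ofReal (z : ℂ) (a b : ℝ) :
    star (I * z * a) * (I * z * b) = ((‖z‖ ^ 2 * a * b : ℝ) : ℂ) := by
  rw [star_mul', star_mul', Complex.star_def, Complex.conj_I, Complex.conj_ofReal,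
    Complex.ofReal_mul, Complex.ofReal_mul, Complex.sq_norm, Complex.normSq_eq_conj_mul_self]
  linear_combination (-(starRingEnd ℂ z * z * a * b)) * Complex.I_sq

theorem trace_commutator_diagonal_general
    {N : ℕ} (w w' : Fin N → ℝ)
    (Y : Matrix (Fin N) (Fin N) ℂ) :
    Matrix.trace
        ((Y * (Complex.I • Matrix.diagonal (fun i => (w i : ℂ)))
            - (Complex.I • Matrix.diagonal (fun i => (w i : ℂ))) * Y)ᴴ
          * (Y * (Complex.I • Matrix.diagonal (fun i => (w' i : ℂ)))
            - (Complex.I • Matrix.diagonal (fun i => (w' i : ℂ))) * Y))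
      = ((∑ i : Fin N, ∑ j : Fin N,
          ‖Y i j‖ ^ 2 * (w j - w i) * (w' j - w' i) : ℝ) : ℂ) := by
  simp only [trace_conjTranspose_mul_eq_sum, commutator_smul_diagonal_apply, ← Complex.ofReal_sub,
    Complex.star_I_mul_mul_I_mul_ofReal, Complex.ofReal_sum]

/-- for `D = i·diag(w)` and `D' = i·diag(w')` with `w, w'` real vectors, and any
complex matrix `Y`, `tr([Y,D]† [Y,D']) = ∑_{i,j} |Y_{ij}|² (w_j - w_i)(w'_j - w'_i)`;
in particular the trace is a real number. -/
theorem trace_commutator_diagonal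
    {N : ℕ} (hN : 1 ≤ N) (w w' : Fin N → ℝ)
    (Y : Matrix (Fin N) (Fin N) ℂ) :
    Matrix.trace
        ((Y * (Complex.I • Matrix.diagonal (fun i => (w i : ℂ)))
            - (Complex.I • Matrix.diagonal (fun i => (w i : ℂ))) * Y)ᴴ
          * (Y * (Complex.I • Matrix.diagonal (fun i => (w' i : ℂ)))
            - (Complex.I • Matrix.diagonal (fun i => (w' i : ℂ))) * Y))
      = ((∑ i : Fin N, ∑ j : Fin N,
          ‖Y i j‖ ^ 2 * (w j - w i) * (w' j - w' i) : ℝ) : ℂ) :=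
  trace_commutator_diagonal_general w w' Y
end

section
/- Let N ≥ 1, let A be an N×N Hermitian complex matrix, and let g : ℝ → ℝ be continuous and monotone (non-decreasing). Then for every N×N complex matrix X, the trace tr([X, g(A)]† · [X, A]) is a nonnegative real number, where g(A) denotes the matrix obtained by applying g to A via the continuous functional calculus (equivalently, by applying g to the eigenvalues of A in a spectral decomposition). -/
/-!
Diagonalise `A = U diag(a) U†` and put `Y = U† X U`. In this basis `[X, g(A)]` is the matrix with
entries `Y i j * (g aⱼ - g aᵢ)`, so `tr([X, g(A)]† [X, A]) = ∑ |Y i j|² (g aⱼ - g aᵢ)(aⱼ - aᵢ)`,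
and every summand is nonnegative because `g` is monotone.
-/

open Matrix

theorem commutator_map_ringEquiv {R : Type*} [Ring R] (e : R ≃+* R) (x b : R) :
    x * e b - e b * x = e (e.symm x * b - b * e.symm x) := by
  simp only [map_sub, map_mul, RingEquiv.apply_symm_apply]

namespace Matrix

theorem trace_conjTranspose_mul_eq_sum_s5 {m n R : Type*} [Fintype m] [Fintype n]
    [NonUnitalNonAssocSemiring R] [Star R] (M M' : Matrix m n R) :
    trace (Mᴴ * M') = ∑ i, ∑ j, star (M j i) * M' j i := by
  simp only [trace, diag, mul_apply, conjTranspose_apply]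

variable {n 𝕜 : Type*} [Fintype n] [DecidableEq n] [RCLike 𝕜]

theorem commutator_diagonal_apply (Y : Matrix n n 𝕜) (d : n → 𝕜) (i j : n) :
    (Y * diagonal d - diagonal d * Y) i j = Y i j * (d j - d i) := by
  simp only [sub_apply, mul_diagonal, diagonal_mul]
  ring

theorem trace_conjStarAlgAut (U : unitary (Matrix n n 𝕜)) (M : Matrix n n 𝕜) :
    trace (Unitary.conjStarAlgAut 𝕜 _ U M) = trace M := by
  rw [Unitary.conjStarAlgAut_apply, trace_mul_cycle, Unitary.coe_star_mul_self, one_mul]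

theorem IsHermitian.trace_commutator_cfc_conjTranspose_mul {A : Matrix n n 𝕜}
    (hA : A.IsHermitian) (f g : ℝ → ℝ) (X : Matrix n n 𝕜) :
    trace ((X * cfc f A - cfc f A * X)ᴴ * (X * cfc g A - cfc g A * X)) =
      ((∑ i, ∑ j,
          ‖(star (hA.eigenvectorUnitary : Matrix n n 𝕜) * X * hA.eigenvectorUnitary) j i‖ ^ 2 *
            ((f (hA.eigenvalues i) - f (hA.eigenvalues j)) *
              (g (hA.eigenvalues i) - g (hA.eigenvalues j))) : ℝ) : 𝕜) := by
  set φ := Unitary.conjStarAlgAut 𝕜 _ hA.eigenvectorUnitary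
  have hcomm (h : ℝ → ℝ) : X * cfc h A - cfc h A * X =
      φ (φ.symm X * diagonal (RCLike.ofReal ∘ h ∘ hA.eigenvalues) -
        diagonal (RCLike.ofReal ∘ h ∘ hA.eigenvalues) * φ.symm X) := by
    rw [hA.cfc_eq h]
    exact commutator_map_ringEquiv φ.toRingEquiv X _
  rw [hcomm f, hcomm g, ← star_eq_conjTranspose, ← map_star, ← map_mul, trace_conjStarAlgAut,
    star_eq_conjTranspose, trace_conjTranspose_mul_eq_sum_s5]
  push_cast
  refine Finset.sum_congr rfl fun i _ ↦ Finset.sum_congr rfl fun j _ ↦ ?_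
  simp only [commutator_diagonal_apply, Function.comp_apply, star_mul', star_sub, RCLike.star_def,
    RCLike.conj_ofReal, ← RCLike.conj_mul, Unitary.conjStarAlgAut_symm_apply, φ]
  ring

end Matrix

theorem trace_commutator_cfc_monotone_nonneg_general
    {N : ℕ} (A : Matrix (Fin N) (Fin N) ℂ) (hA : A.IsHermitian)
    (g : ℝ → ℝ) (hg_mono : Monotone g)
    (X : Matrix (Fin N) (Fin N) ℂ) :
    ∃ r : ℝ, 0 ≤ r ∧
      Matrix.trace ((X * cfc g A - cfc g A * X)ᴴ * (X * A - A * X)) = (r : ℂ) := by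
  have htrace := hA.trace_commutator_cfc_conjTranspose_mul g id X
  rw [cfc_id (R := ℝ) A] at htrace
  refine ⟨_, ?_, htrace⟩
  -- unification against `Complex.ofReal r` returns `r = algebraMap ℝ ℝ (∑ …)`
  rw [Algebra.algebraMap_self, RingHom.id_apply]
  exact Finset.sum_nonneg fun i _ ↦ Finset.sum_nonneg fun j _ ↦ mul_nonneg (sq_nonneg _)
    ((hg_mono.monovary monotone_id).sub_mul_sub_nonneg _ _)

/-- for a Hermitian matrix `A`, a continuous monotone `g : ℝ → ℝ`, and any
matrix `X`, the trace `tr([X, g(A)]† [X, A])` is a nonnegative real number, where `g(A)` is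
the continuous functional calculus `cfc g A`. -/
theorem trace_commutator_cfc_monotone_nonneg
    {N : ℕ} (hN : 1 ≤ N) (A : Matrix (Fin N) (Fin N) ℂ) (hA : A.IsHermitian)
    (g : ℝ → ℝ) (hg_cont : Continuous g) (hg_mono : Monotone g)
    (X : Matrix (Fin N) (Fin N) ℂ) :
    ∃ r : ℝ, 0 ≤ r ∧
      Matrix.trace ((X * cfc g A - cfc g A * X)ᴴ * (X * A - A * X)) = (r : ℂ) :=
  trace_commutator_cfc_monotone_nonneg_general A hA g hg_mono X
end

section
/- Let N ≥ 1, let P̃ be an N×N skew-Hermitian complex matrix, ε a real number, and W̃ any N×N complex matrix. Define W_n = W̃ − (ε/2)[W̃, P̃] − (ε²/4)·P̃·W̃·P̃ and W_{n+1} = W_n + ε·[W̃, P̃]. Then W_{n+1} = Q·W_n·Q⁻¹ with the invertible matrix Q = (I − (ε/2)P̃)·(I + (ε/2)P̃)⁻¹. In particular the isospectral midpoint step preserves the characteristic polynomial: charpoly(W_{n+1}) = charpoly(W_n), so W_{n+1} and W_n have the same eigenvalues with multiplicities. -/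
open Matrix Polynomial

open scoped ComplexOrder in
lemma aux_isUnit {N : ℕ} (P : Matrix (Fin N) (Fin N) ℂ) (hP : Pᴴ = -P) (c : ℝ) :
    IsUnit ((1 : Matrix (Fin N) (Fin N) ℂ) + (c : ℂ) • P) := by
  set S : Matrix (Fin N) (Fin N) ℂ := (c : ℂ) • P with hS
  have hSH : Sᴴ = -S := by
    simp [hS, conjTranspose_smul, hP, Complex.star_def, Complex.conj_ofReal, smul_neg]
  set A : Matrix (Fin N) (Fin N) ℂ := 1 + S with hA
  have hAH : Aᴴ = 1 - S := by
    rw [hA, conjTranspose_add, conjTranspose_one, hSH, sub_eq_add_neg]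
  have key : Aᴴ * A = 1 + S * Sᴴ := by
    rw [hAH, hA, hSH]
    noncomm_ring
  have hpd : (Aᴴ * A).PosDef := by
    rw [key]
    exact Matrix.PosDef.add_posSemidef Matrix.PosDef.one
      (Matrix.posSemidef_self_mul_conjTranspose _)
  have hU := hpd.isUnit
  have hdet : IsUnit (Aᴴ * A).det := (Matrix.isUnit_iff_isUnit_det _).mp hU
  rw [Matrix.det_mul] at hdet
  exact (Matrix.isUnit_iff_isUnit_det _).mpr (IsUnit.mul_iff.mp hdet).2

lemma aux_charpoly_conj {N : ℕ} (Q M : Matrix (Fin N) (Fin N) ℂ) (hQ : IsUnit Q) :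
    (Q * M * Q⁻¹).charpoly = M.charpoly := by
  classical
  have hd : IsUnit Q.det := (Matrix.isUnit_iff_isUnit_det Q).mp hQ
  have h1 : Q * Q⁻¹ = 1 := Matrix.mul_nonsing_inv Q hd
  set f : Matrix (Fin N) (Fin N) ℂ →+* Matrix (Fin N) (Fin N) ℂ[X] :=
    (Polynomial.C : ℂ →+* ℂ[X]).mapMatrix with hf
  have hmul : f Q * f Q⁻¹ = 1 := by rw [← _root_.map_mul, h1, _root_.map_one]
  have hcomm : Matrix.scalar (Fin N) (X : ℂ[X]) * f Q = f Q * Matrix.scalar (Fin N) (X : ℂ[X]) :=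
    (Matrix.scalar_commute (X : ℂ[X]) (fun r' => Commute.all _ r') (f Q)).eq
  have hcm : charmatrix (Q * M * Q⁻¹) = f Q * charmatrix M * f Q⁻¹ := by
    rw [charmatrix, charmatrix, Matrix.mul_sub, Matrix.sub_mul]
    congr 1
    · rw [← hcomm, Matrix.mul_assoc, hmul, Matrix.mul_one]
    · simp only [hf, RingHom.mapMatrix_apply, ← Matrix.map_mul]
  rw [Matrix.charpoly, Matrix.charpoly, hcm, Matrix.det_mul, Matrix.det_mul]
  have hdet1 : (f Q⁻¹).det * (f Q).det = 1 := by
    rw [mul_comm, ← Matrix.det_mul, hmul, Matrix.det_one]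
  calc (f Q).det * (charmatrix M).det * (f Q⁻¹).det
      = (charmatrix M).det * ((f Q⁻¹).det * (f Q).det) := by ring
    _ = (charmatrix M).det := by rw [hdet1, mul_one]

/-- the isospectral midpoint step is a conjugation by the invertible matrix
`Q = (I - (ε/2)P̃)(I + (ε/2)P̃)⁻¹`, hence preserves the characteristic polynomial
(and so the eigenvalues with multiplicities). -/
theorem isospectral_midpoint_step_isospectral
    {N : ℕ} (hN : 1 ≤ N) (P : Matrix (Fin N) (Fin N) ℂ) (hP : Pᴴ = -P)
    (ε : ℝ) (W : Matrix (Fin N) (Fin N) ℂ)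
    (Wn Wn1 : Matrix (Fin N) (Fin N) ℂ)
    (hWn : Wn = W - (ε / 2) • (W * P - P * W) - ((ε ^ 2) / 4) • (P * W * P))
    (hWn1 : Wn1 = Wn + ε • (W * P - P * W)) :
    IsUnit (((1 : Matrix (Fin N) (Fin N) ℂ) - (ε / 2) • P)
        * ((1 : Matrix (Fin N) (Fin N) ℂ) + (ε / 2) • P)⁻¹) ∧
    Wn1 = (((1 : Matrix (Fin N) (Fin N) ℂ) - (ε / 2) • P)
          * ((1 : Matrix (Fin N) (Fin N) ℂ) + (ε / 2) • P)⁻¹) * Wn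
        * ((((1 : Matrix (Fin N) (Fin N) ℂ) - (ε / 2) • P)
          * ((1 : Matrix (Fin N) (Fin N) ℂ) + (ε / 2) • P)⁻¹))⁻¹ ∧
    Wn1.charpoly = Wn.charpoly := by
  classical
  have hsmul : ∀ r : ℝ, ((r : ℂ)) • P = r • P := by
    intro r
    ext i j
    simp [Complex.real_smul]
  set A : Matrix (Fin N) (Fin N) ℂ := 1 + (ε / 2) • P with hA
  set B : Matrix (Fin N) (Fin N) ℂ := 1 - (ε / 2) • P with hB
  have hUA : IsUnit A := by
    rw [hA, ← hsmul]
    exact aux_isUnit P hP (ε / 2)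
  have hUB : IsUnit B := by
    rw [hB, sub_eq_add_neg, ← neg_smul, ← hsmul]
    exact aux_isUnit P hP (-(ε / 2))
  have hAinv : A * A⁻¹ = 1 := Matrix.mul_nonsing_inv A ((Matrix.isUnit_iff_isUnit_det A).mp hUA)
  have hAinv' : A⁻¹ * A = 1 := Matrix.nonsing_inv_mul A ((Matrix.isUnit_iff_isUnit_det A).mp hUA)
  have hUAinv : IsUnit A⁻¹ := Matrix.isUnit_nonsing_inv_iff.mpr hUA
  have hQ : IsUnit (B * A⁻¹) := hUB.mul hUAinv
  have hcc : (ε / 2 : ℝ) * (ε / 2) = ε ^ 2 / 4 := by ring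
  have hWnAB : Wn = A * W * B := by
    rw [hWn, hA, hB]
    simp only [Matrix.add_mul, Matrix.mul_add, Matrix.mul_sub, Matrix.sub_mul, Matrix.one_mul,
      Matrix.mul_one, Matrix.smul_mul, Matrix.mul_smul, smul_sub, smul_add, smul_smul]
    rw [hcc]
    abel
  have hWn1AB : Wn1 = B * W * A := by
    rw [hWn1, hWn, hA, hB]
    simp only [Matrix.add_mul, Matrix.mul_add, Matrix.mul_sub, Matrix.sub_mul, Matrix.one_mul,
      Matrix.mul_one, Matrix.smul_mul, Matrix.mul_smul, smul_sub, smul_add, smul_smul]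
    rw [hcc]
    have h2 : ε • (W * P) - ε • (P * W)
        = (ε / 2 : ℝ) • (W * P) + (ε / 2 : ℝ) • (W * P)
          - ((ε / 2 : ℝ) • (P * W) + (ε / 2 : ℝ) • (P * W)) := by
      rw [← add_smul, ← add_smul]
      norm_num
    rw [h2]
    abel
  have hcomm : A * B = B * A := by
    rw [hA, hB]
    simp only [Matrix.add_mul, Matrix.mul_add, Matrix.mul_sub, Matrix.sub_mul, Matrix.one_mul,
      Matrix.mul_one]
    abel
  have key : Wn1 * (B * A⁻¹) = (B * A⁻¹) * Wn := by
    calc Wn1 * (B * A⁻¹) = B * W * (A * B) * A⁻¹ := by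
          rw [hWn1AB]; noncomm_ring
      _ = B * W * (B * A) * A⁻¹ := by rw [hcomm]
      _ = B * W * B * (A * A⁻¹) := by noncomm_ring
      _ = B * W * B := by rw [hAinv, Matrix.mul_one]
      _ = B * (A⁻¹ * A) * W * B := by rw [hAinv', Matrix.mul_one]
      _ = (B * A⁻¹) * (A * W * B) := by noncomm_ring
      _ = (B * A⁻¹) * Wn := by rw [hWnAB]
  have hconj : Wn1 = (B * A⁻¹) * Wn * (B * A⁻¹)⁻¹ := by
    have hQinv : (B * A⁻¹) * (B * A⁻¹)⁻¹ = 1 :=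
      Matrix.mul_nonsing_inv _ ((Matrix.isUnit_iff_isUnit_det _).mp hQ)
    calc Wn1 = Wn1 * ((B * A⁻¹) * (B * A⁻¹)⁻¹) := by rw [hQinv, Matrix.mul_one]
      _ = (Wn1 * (B * A⁻¹)) * (B * A⁻¹)⁻¹ := by noncomm_ring
      _ = (B * A⁻¹) * Wn * (B * A⁻¹)⁻¹ := by rw [key]
  exact ⟨hQ, hconj, by rw [hconj]; exact aux_charpoly_conj _ _ hQ⟩
end

section
/- Let N ≥ 1, let ħ ≠ 0 be real, let λ₁, …, λ_N be real numbers, and let P : ℝ → M_N(ℂ) be such that P(t) is skew-Hermitian for every t. Suppose e₁, …, e_N : ℝ → ℂ^N are differentiable with de_k/dt = (1/ħ)·P(t)·e_k(t) for each k. Define W(t) = ∑_{k=1}^{N} (−i·λ_k)·e_k(t)·e_k(t)† (sum of scaled outer products, with (e e†)_{ij} = e_i · conj(e_j)). Then W is differentiable and dW/dt = −(1/ħ)·[W(t), P(t)], i.e., W solves the Euler–Zeitlin equation. -/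
/-! If `ė = A e`, the outer product `E = e e†` satisfies `Ė = A E + E A†`, which for
skew-Hermitian `A` is the commutator `[A, E]`. The Euler–Zeitlin equation for
`W = ∑ₖ (-i λₖ) eₖ eₖ†` then follows by linearity, with `A = P / ħ`. -/

open Matrix

section

variable {n 𝕜 : Type*} [RCLike 𝕜]

theorem hasDerivAt_vecMulVec_star_apply {e : ℝ → n → 𝕜} {v : n → 𝕜} {t : ℝ}
    (he : ∀ i, HasDerivAt (fun s => e s i) (v i) t) (i j : n) :
    HasDerivAt (fun s => vecMulVec (e s) (star (e s)) i j)
      ((vecMulVec v (star (e t)) + vecMulVec (e t) (star v)) i j) t :=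
  (he i).fun_mul (he j).star

variable [Fintype n]

theorem vecMulVec_mulVec_add_vecMulVec_star_mulVec (A : Matrix n n 𝕜) (x : n → 𝕜) :
    vecMulVec (A *ᵥ x) (star x) + vecMulVec x (star (A *ᵥ x)) =
      A * vecMulVec x (star x) + vecMulVec x (star x) * Aᴴ := by
  rw [mul_vecMulVec, vecMulVec_mul, star_mulVec]

theorem hasDerivAt_sum_smul_vecMulVec_star_apply {ι : Type*} [Fintype ι] (c : ι → 𝕜)
    {e : ι → ℝ → n → 𝕜} {A : Matrix n n 𝕜} (hA : Aᴴ = -A) {t : ℝ}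
    (he : ∀ k i, HasDerivAt (fun s => e k s i) ((A *ᵥ e k t) i) t) (i j : n) :
    HasDerivAt (fun s => (∑ k, c k • vecMulVec (e k s) (star (e k s))) i j)
      ((A * (∑ k, c k • vecMulVec (e k t) (star (e k t))) -
        (∑ k, c k • vecMulVec (e k t) (star (e k t))) * A) i j) t := by
  set E := fun k s => vecMulVec (e k s) (star (e k s))
  have hE : ∀ k, HasDerivAt (fun s => (c k • E k s) i j)
      ((c k • (A * E k t - E k t * A)) i j) t := by
    intro k
    have hEk := hasDerivAt_vecMulVec_star_apply (he k) i j
    rw [vecMulVec_mulVec_add_vecMulVec_star_mulVec, hA, mul_neg, ← sub_eq_add_neg] at hEk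
    exact hEk.const_mul (c k)
  have hcomm : A * (∑ k, c k • E k t) - (∑ k, c k • E k t) * A =
      ∑ k, c k • (A * E k t - E k t * A) := by
    simp only [Finset.mul_sum, Finset.sum_mul, Matrix.mul_smul, Matrix.smul_mul, smul_sub,
      Finset.sum_sub_distrib]
  rw [hcomm]
  simpa only [Matrix.sum_apply] using HasDerivAt.fun_sum (u := Finset.univ) fun k _ => hE k

end

theorem outer_product_sum_solves_euler_zeitlin_general
    {N : ℕ} (hbar : ℝ)
    (lam : Fin N → ℝ)
    (P : ℝ → Matrix (Fin N) (Fin N) ℂ) (hPskew : ∀ t : ℝ, (P t)ᴴ = -P t)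
    (e : Fin N → ℝ → (Fin N → ℂ))
    (he : ∀ (k : Fin N) (t : ℝ) (i : Fin N),
      HasDerivAt (fun s => e k s i) (((1 / hbar) • (P t *ᵥ e k t)) i) t)
    (W : ℝ → Matrix (Fin N) (Fin N) ℂ)
    (hWdef : ∀ t : ℝ, W t = ∑ k : Fin N,
      (-(Complex.I * (lam k : ℂ))) •
        Matrix.vecMulVec (e k t) (fun j => starRingEnd ℂ (e k t j))) :
    ∀ (t : ℝ) (i j : Fin N),
      HasDerivAt (fun s => W s i j) ((-(1 / hbar) • (W t * P t - P t * W t)) i j) t := by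
  intro t i j
  have hA : ((1 / hbar) • P t)ᴴ = -((1 / hbar) • P t) := by
    rw [conjTranspose_smul, hPskew, star_trivial, smul_neg]
  have he' : ∀ k i, HasDerivAt (fun s => e k s i) ((((1 / hbar) • P t) *ᵥ e k t) i) t := by
    simpa only [smul_mulVec] using (he · t)
  have hW : (fun s => W s i j) = fun s =>
      (∑ k, (-(Complex.I * (lam k : ℂ))) • vecMulVec (e k s) (star (e k s))) i j :=
    funext fun s => by rw [hWdef]; rfl
  have hcomm : -(1 / hbar) • (W t * P t - P t * W t) =
      (1 / hbar) • P t * W t - W t * ((1 / hbar) • P t) := by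
    rw [Matrix.smul_mul, Matrix.mul_smul, ← smul_sub, neg_smul, ← smul_neg, neg_sub]
  rw [hW, hcomm, hWdef t]
  exact hasDerivAt_sum_smul_vecMulVec_star_apply _ hA he' i j

/-- if the vectors `e_k` are advected by `ė_k = (1/ħ)·P·e_k` with `P(t)`
skew-Hermitian, then `W(t) = ∑_k (-i·λ_k)·e_k(t)·e_k(t)†` is differentiable and solves the
Euler–Zeitlin equation `dW/dt = -(1/ħ)[W, P]` (both derivatives stated entrywise). -/
theorem outer_product_sum_solves_euler_zeitlin
    {N : ℕ} (hN : 1 ≤ N) (hbar : ℝ) (hbar_ne : hbar ≠ 0)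
    (lam : Fin N → ℝ)
    (P : ℝ → Matrix (Fin N) (Fin N) ℂ) (hPskew : ∀ t : ℝ, (P t)ᴴ = -P t)
    (e : Fin N → ℝ → (Fin N → ℂ))
    (he : ∀ (k : Fin N) (t : ℝ) (i : Fin N),
      HasDerivAt (fun s => e k s i) (((1 / hbar) • (P t *ᵥ e k t)) i) t)
    (W : ℝ → Matrix (Fin N) (Fin N) ℂ)
    (hWdef : ∀ t : ℝ, W t = ∑ k : Fin N,
      (-(Complex.I * (lam k : ℂ))) •
        Matrix.vecMulVec (e k t) (fun j => starRingEnd ℂ (e k t j))) :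
    ∀ (t : ℝ) (i j : Fin N),
      HasDerivAt (fun s => W s i j) ((-(1 / hbar) • (W t * P t - P t * W t)) i j) t :=
  outer_product_sum_solves_euler_zeitlin_general hbar lam P hPskew e he W hWdef
end
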